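/- Let β₁, β₂ ∈ (0,1) satisfy β₁ > 1/2 and β₂ < 2 − 1/β₁ (equivalently β₁(2−β₂) > 1). Then A₁ = [0,1] × {1} is a chaotic saddle; in particular the basin B(A₁) has two-dimensional Lebesgue measure zero, m₂(B(A₁)) = 0. -/

import Mathlib

open MeasureTheory Filter Set

noncomputable section

/-- The fiber map `g₁,β(y) = y + y(1-y)(y-β)`. -/
def g1 (β y : ℝ) : ℝ := y + y * (1 - y) * (y - β)

/-- The fiber map `g₂,β(y) = y - y(1-y)(y-β)`. -/
def g2 (β y : ℝ) : ℝ := y - y * (1 - y) * (y - β)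

/-- The doubling map on `[0,1]`. -/
def dbl (x : ℝ) : ℝ := if x ≤ 1/2 then 2*x else 2*x - 1

/-- The skew product `F(x,y) = (f(x), g₁,β₁(y))` for `x ≤ 1/2` and
`F(x,y) = (f(x), g₂,β₂(y))` for `x > 1/2`. -/
def Fsk (β1 β2 : ℝ) (p : ℝ × ℝ) : ℝ × ℝ :=
  if p.1 ≤ 1/2 then (dbl p.1, g1 β1 p.2) else (dbl p.1, g2 β2 p.2)

/-- The unit square `[0,1]²`. -/
def unitSq : Set (ℝ × ℝ) := Set.Icc (0:ℝ) 1 ×ˢ Set.Icc (0:ℝ) 1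

/-- The basin of points of `[0,1]²` whose second coordinate tends to `c` under iteration
of the skew product. -/
def basin (β1 β2 c : ℝ) : Set (ℝ × ℝ) :=
  {p | p ∈ unitSq ∧ Tendsto (fun n : ℕ => ((Fsk β1 β2)^[n] p).2) atTop (nhds c)}

/-!
Along the invariant line `y = 1` we have `g₁'(1) = β₁` and `g₂'(1) = 2 - β₂`, so while an orbit
approaches the line, `1 - yₙ` is multiplied by about `β₁` or `2 - β₂` according to the branch
of the doubling map taken by `xₙ`. The doubling map is ergodic for Lebesgue measure and
`log β₁ + log (2 - β₂) > 0`, so the Birkhoff sums of the logarithms of these factors tend to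
`-∞` only on a null set of `x`, whereas `yₙ → 1` forces them to.
-/

open Real Topology

theorem preimage_setOf_tendsto_birkhoffSum_atBot {α : Type*} (T : α → α) (φ : α → ℝ) :
    T ⁻¹' {x | Tendsto (fun n => birkhoffSum T φ n x) atTop atBot} =
      {x | Tendsto (fun n => birkhoffSum T φ n x) atTop atBot} := by
  ext x
  rw [mem_preimage, mem_ofPred_eq, mem_ofPred_eq,
    ← tendsto_add_atTop_iff_nat 1 (f := fun n => birkhoffSum T φ n x)]
  simp only [birkhoffSum_succ']
  refine ⟨tendsto_atBot_add_const_left _ _, fun h => ?_⟩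
  simpa using tendsto_atBot_add_const_left _ (-φ x) h

section BirkhoffSum

variable {α : Type*} [MeasurableSpace α] {μ : Measure α} {T : α → α} {φ : α → ℝ}

theorem measurable_birkhoffSum (hT : Measurable T) (hφ : Measurable φ) (n : ℕ) :
    Measurable (birkhoffSum T φ n) :=
  Finset.measurable_sum _ fun k _ => hφ.comp (hT.iterate k)

namespace MeasureTheory.MeasurePreserving

theorem integral_birkhoffSum (hT : MeasurePreserving T μ μ) (hφ : Integrable φ μ) (n : ℕ) :
    ∫ x, birkhoffSum T φ n x ∂μ = n * ∫ x, φ x ∂μ := by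
  have hcomp : ∀ k, Integrable (fun x => φ (T^[k] x)) μ := fun k =>
    (hT.iterate k).integrable_comp_of_integrable hφ
  have hint : ∀ k, ∫ x, φ (T^[k] x) ∂μ = ∫ x, φ x ∂μ := fun k => by
    rw [← integral_map (hT.iterate k).aemeasurable
      (by rw [(hT.iterate k).map_eq]; exact hφ.aestronglyMeasurable), (hT.iterate k).map_eq]
  simp only [birkhoffSum, integral_finsetSum _ fun k _ => hcomp k, hint, Finset.sum_const,
    Finset.card_range, nsmul_eq_mul]

/-- Fatou's lemma applied to `C - S_n φ / n ≥ 0`: if the Birkhoff sums tended to `-∞` almost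
everywhere, the integral of `C` would be at most `C - ∫ φ`. -/
theorem not_ae_tendsto_birkhoffSum_atBot [IsProbabilityMeasure μ] (hT : MeasurePreserving T μ μ)
    (hφm : Measurable φ) {C : ℝ} (hφC : ∀ x, φ x ≤ C) (hφi : Integrable φ μ)
    (hpos : 0 < ∫ x, φ x ∂μ) :
    ¬ ∀ᵐ x ∂μ, Tendsto (fun n => birkhoffSum T φ n x) atTop atBot := by
  intro hae
  set g := fun (n : ℕ) x => ENNReal.ofReal (C - birkhoffSum T φ n x / n)
  have hC : ∫ x, φ x ∂μ ≤ C := by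
    simpa using integral_mono hφi (integrable_const C) hφC
  have hSC : ∀ n x, birkhoffSum T φ n x / n ≤ C := fun n x => by
    rcases n.eq_zero_or_pos with rfl | hn
    · simpa using hpos.trans_le hC |>.le
    · rw [div_le_iff₀ (by positivity)]
      simpa [birkhoffSum, mul_comm] using
        Finset.sum_le_sum fun k (_ : k ∈ Finset.range n) => hφC (T^[k] x)
  have hlint : ∀ n, 1 ≤ n → ∫⁻ x, g n x ∂μ = ENNReal.ofReal (C - ∫ x, φ x ∂μ) := fun n hn => by
    have hSi : Integrable (fun x => birkhoffSum T φ n x / n) μ :=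
      (integrable_finsetSum _ fun k _ =>
        (hT.iterate k).integrable_comp_of_integrable hφi).div_const _
    have hgi : Integrable (fun x => C - birkhoffSum T φ n x / n) μ := (integrable_const C).sub hSi
    rw [← ofReal_integral_eq_lintegral_ofReal hgi (.of_forall fun x => sub_nonneg.2 (hSC n x)),
      integral_sub (integrable_const C) hSi, integral_div, hT.integral_birkhoffSum hφi,
      integral_const]
    field_simp
    simp
  have hliminf : ∀ᵐ x ∂μ, ENNReal.ofReal C ≤ liminf (fun n => g n x) atTop := by
    filter_upwards [hae] with x hx
    refine le_liminf_of_le (by isBoundedDefault) ?_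
    filter_upwards [hx.eventually (eventually_le_atBot 0)] with n hn
    exact ENNReal.ofReal_le_ofReal (by linarith [div_nonpos_of_nonpos_of_nonneg hn n.cast_nonneg])
  have hfatou : ENNReal.ofReal C ≤ ENNReal.ofReal (C - ∫ x, φ x ∂μ) :=
    calc ENNReal.ofReal C = ∫⁻ _, ENNReal.ofReal C ∂μ := by simp
      _ ≤ ∫⁻ x, liminf (fun n => g n x) atTop ∂μ := lintegral_mono_ae hliminf
      _ ≤ liminf (fun n => ∫⁻ x, g n x ∂μ) atTop := lintegral_liminf_le fun n =>
          (measurable_const.sub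
            ((measurable_birkhoffSum hT.measurable hφm n).div_const _)).ennreal_ofReal
      _ = ENNReal.ofReal (C - ∫ x, φ x ∂μ) := by
          rw [liminf_congr (eventually_atTop.2 ⟨1, hlint⟩), liminf_const]
  rw [ENNReal.ofReal_le_ofReal_iff (sub_nonneg.2 hC)] at hfatou
  linarith

end MeasureTheory.MeasurePreserving

theorem Ergodic.measure_setOf_tendsto_birkhoffSum_atBot [IsProbabilityMeasure μ]
    (hT : Ergodic T μ) (hφm : Measurable φ) {C : ℝ} (hφC : ∀ x, φ x ≤ C)
    (hφi : Integrable φ μ) (hpos : 0 < ∫ x, φ x ∂μ) :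
    μ {x | Tendsto (fun n => birkhoffSum T φ n x) atTop atBot} = 0 := by
  have hmeas : MeasurableSet {x | Tendsto (fun n => birkhoffSum T φ n x) atTop atBot} :=
    measurableSet_tendsto _ (measurable_birkhoffSum hT.measurable hφm)
  refine (hT.measure_self_or_compl_eq_zero hmeas
    (preimage_setOf_tendsto_birkhoffSum_atBot T φ)).resolve_right fun h => ?_
  exact hT.toMeasurePreserving.not_ae_tendsto_birkhoffSum_atBot hφm hφC hφi hpos (ae_iff.2 h)

end BirkhoffSum

theorem AddCircle.measurable_liftIoc {β : Type*} [MeasurableSpace β] {p : ℝ} [Fact (0 < p)]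
    (a : ℝ) {f : ℝ → β} (hf : Measurable f) : Measurable (AddCircle.liftIoc p a f) :=
  hf.comp (measurable_subtype_coe.comp (AddCircle.measurableEquivIoc p a).measurable)

theorem coe_dbl (t : ℝ) : ((dbl t : ℝ) : UnitAddCircle) = 2 • (t : UnitAddCircle) := by
  rw [← AddCircle.coe_nsmul, dbl]
  split_ifs
  · norm_num
  · rw [AddCircle.coe_sub, AddCircle.coe_period, sub_zero]
    norm_num

theorem mapsTo_dbl_Ioc : MapsTo dbl (Ioc 0 1) (Ioc 0 1) := fun t ⟨h0, h1⟩ => by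
  unfold dbl
  split_ifs <;> constructor <;> linarith

theorem coe_iterate_dbl (k : ℕ) (t : ℝ) :
    ((dbl^[k] t : ℝ) : UnitAddCircle) = (fun z : UnitAddCircle => 2 • z)^[k] t :=
  (Function.Semiconj.iterate_right (f := ((↑) : ℝ → UnitAddCircle)) coe_dbl k) t

def branchWeight (a b t : ℝ) : ℝ := if t ≤ 1/2 then a else b

theorem measurable_branchWeight (a b : ℝ) : Measurable (branchWeight a b) :=
  Measurable.ite measurableSet_Iic measurable_const measurable_const

theorem branchWeight_pos {a b : ℝ} (ha : 0 < a) (hb : 0 < b) (t : ℝ) : 0 < branchWeight a b t := by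
  unfold branchWeight; split_ifs <;> assumption

theorem branchWeight_le_max (a b t : ℝ) : branchWeight a b t ≤ max a b := by
  unfold branchWeight; split_ifs
  · exact le_max_left a b
  · exact le_max_right a b

theorem abs_branchWeight (a b t : ℝ) : |branchWeight a b t| = branchWeight |a| |b| t :=
  apply_ite _ _ _ _

theorem log_branchWeight (a b t : ℝ) :
    log (branchWeight a b t) = branchWeight (log a) (log b) t :=
  apply_ite _ _ _ _

-- `dbl` maps `(0, 1]` into itself, and `liftIoc 1 0` reads functions on this fundamental domain.
theorem birkhoffSum_liftIoc_coe {ψ : ℝ → ℝ} {x : ℝ} (hx : x ∈ Ioc 0 1) (n : ℕ) :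
    birkhoffSum (fun z : UnitAddCircle => 2 • z) (AddCircle.liftIoc 1 0 ψ) n x =
      ∑ k ∈ Finset.range n, ψ (dbl^[k] x) := by
  refine Finset.sum_congr rfl fun k _ => ?_
  rw [← coe_iterate_dbl, AddCircle.liftIoc_coe_apply]
  simpa using mapsTo_dbl_Ioc.iterate k hx

theorem integral_branchWeight (a b : ℝ) : ∫ t in (0:ℝ)..1, branchWeight a b t = (a + b) / 2 := by
  have piece : ∀ {c d e : ℝ}, (∀ t ∈ uIoc c d, branchWeight a b t = e) →
      IntervalIntegrable (branchWeight a b) volume c d ∧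
        ∫ t in c..d, branchWeight a b t = (d - c) * e := fun h => by
    have hae : branchWeight a b =ᵐ[volume.restrict (uIoc _ _)] fun _ => _ :=
      (ae_restrict_mem measurableSet_uIoc).mono h
    refine ⟨(intervalIntegrable_congr_ae hae).2 intervalIntegrable_const, ?_⟩
    rw [intervalIntegral.integral_congr_ae (ae_imp_of_ae_restrict hae),
      intervalIntegral.integral_const, smul_eq_mul]
  obtain ⟨hiL, hL⟩ := piece (c := 0) (d := 1/2) (e := a) fun t ht => by
    rw [uIoc_of_le (by norm_num)] at ht
    exact if_pos ht.2
  obtain ⟨hiR, hR⟩ := piece (c := 1/2) (d := 1) (e := b) fun t ht => by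
    rw [uIoc_of_le (by norm_num)] at ht
    exact if_neg (not_le.2 ht.1)
  rw [← intervalIntegral.integral_add_adjacent_intervals hiL hiR, hL, hR]
  ring

theorem volume_setOf_tendsto_sum_branchWeight_atBot {a b : ℝ} (hab : 0 < a + b) :
    volume {x ∈ Ioc (0:ℝ) 1 |
      Tendsto (fun n => ∑ k ∈ Finset.range n, branchWeight a b (dbl^[k] x)) atTop atBot} = 0 := by
  set φ := AddCircle.liftIoc 1 0 (branchWeight a b)
  have hφm : Measurable φ := AddCircle.measurable_liftIoc 0 (measurable_branchWeight a b)
  have hφi : Integrable φ := Integrable.of_bound hφm.aestronglyMeasurable (max |a| |b|)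
    (.of_forall fun z => (abs_branchWeight a b _).trans_le (branchWeight_le_max _ _ _))
  have hφ : 0 < ∫ z, φ z := by
    rw [AddCircle.integral_liftIoc_eq_intervalIntegral, zero_add, integral_branchWeight]
    positivity
  have : IsProbabilityMeasure (volume : Measure UnitAddCircle) := ⟨UnitAddCircle.measure_univ⟩
  have hnull :=
    (AddCircle.ergodic_nsmul (T := 1) one_lt_two).measure_setOf_tendsto_birkhoffSum_atBot
      hφm (fun _ => branchWeight_le_max _ _ _) hφi hφ
  have hpre := (UnitAddCircle.measurePreserving_mk 0).quasiMeasurePreserving.preimage_null hnull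
  rw [Measure.restrict_apply' measurableSet_Ioc, zero_add] at hpre
  refine measure_mono_null ?_ hpre
  rintro x ⟨hx, hS⟩
  refine ⟨?_, hx⟩
  simpa only [mem_preimage, mem_ofPred_eq, φ, birkhoffSum_liftIoc_coe hx] using hS

theorem g1_mem_Ico {β y : ℝ} (hβ : β ∈ Icc (0:ℝ) 1) (hy : y ∈ Ico (0:ℝ) 1) :
    g1 β y ∈ Ico (0:ℝ) 1 := by
  obtain ⟨hβ0, hβ1⟩ := hβ
  obtain ⟨hy0, hy1⟩ := hy
  unfold g1
  constructor
  · nlinarith [mul_nonneg hy0 (sub_nonneg.2 hy1.le)]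
  · nlinarith [mul_nonneg (mul_nonneg (sub_nonneg.2 hy1.le) (sub_nonneg.2 hy1.le)) hy0]

theorem g2_mem_Ico {β y : ℝ} (hβ : β ∈ Icc (0:ℝ) 1) (hy : y ∈ Ico (0:ℝ) 1) :
    g2 β y ∈ Ico (0:ℝ) 1 := by
  obtain ⟨hβ0, hβ1⟩ := hβ
  obtain ⟨hy0, hy1⟩ := hy
  unfold g2
  constructor
  · nlinarith [mul_nonneg hy0 (sub_nonneg.2 hy1.le), sq_nonneg (1 - y), sq_nonneg y]
  · have : 0 < 1 + y * y - β * y := by nlinarith [sq_nonneg (y - 1/2)]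
    nlinarith [mul_pos (sub_pos.2 hy1) this]

theorem mul_one_sub_le_one_sub_g1 {β y : ℝ} (hβ : β ≤ 1) (hy : y ∈ Icc (0:ℝ) 1) :
    β * (1 - y) ≤ 1 - g1 β y := by
  have h : 1 - g1 β y - β * (1 - y) = (1 - y) ^ 2 * (1 + y - β) := by unfold g1; ring
  nlinarith [mul_nonneg (sq_nonneg (1 - y)) (by linarith [hy.1] : 0 ≤ 1 + y - β)]

theorem mul_one_sub_le_one_sub_g2 {β b y : ℝ} (hβ : 0 ≤ β) (hy : y ∈ Icc (0:ℝ) 1)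
    (h : 2 * (1 - y) ≤ 2 - β - b) : b * (1 - y) ≤ 1 - g2 β y := by
  have h' : 1 - g2 β y - b * (1 - y) = (1 - y) * (2 - β - b - (1 - y) * (1 + y - β)) := by
    unfold g2; ring
  have : (1 - y) * (1 + y - β) ≤ (1 - y) * 2 :=
    mul_le_mul_of_nonneg_left (by linarith [hy.2]) (by linarith [hy.2])
  nlinarith [mul_nonneg (by linarith [hy.2] : 0 ≤ 1 - y)
    (by linarith : 0 ≤ 2 - β - b - (1 - y) * (1 + y - β))]

theorem Fsk_fst (β1 β2 : ℝ) (p : ℝ × ℝ) : (Fsk β1 β2 p).1 = dbl p.1 := by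
  unfold Fsk; split_ifs <;> rfl

theorem Fsk_iterate_fst (β1 β2 : ℝ) (n : ℕ) (p : ℝ × ℝ) :
    ((Fsk β1 β2)^[n] p).1 = dbl^[n] p.1 :=
  (Function.Semiconj.iterate_right (f := Prod.fst) (Fsk_fst β1 β2) n) p

theorem mapsTo_Fsk_snd_Ico {β1 β2 : ℝ} (hβ1 : β1 ∈ Icc (0:ℝ) 1) (hβ2 : β2 ∈ Icc (0:ℝ) 1) :
    MapsTo (Fsk β1 β2) {p | p.2 ∈ Ico 0 1} {p | p.2 ∈ Ico 0 1} := fun p hp => by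
  unfold Fsk; split_ifs
  exacts [g1_mem_Ico hβ1 hp, g2_mem_Ico hβ2 hp]

theorem branchWeight_mul_one_sub_le_one_sub_Fsk_snd {β1 β2 b : ℝ} (hβ1 : β1 ≤ 1) (hβ2 : 0 ≤ β2)
    {p : ℝ × ℝ} (hp : p.2 ∈ Icc (0:ℝ) 1) (h : 2 * (1 - p.2) ≤ 2 - β2 - b) :
    branchWeight β1 b p.1 * (1 - p.2) ≤ 1 - (Fsk β1 β2 p).2 := by
  unfold Fsk branchWeight; split_ifs
  exacts [mul_one_sub_le_one_sub_g1 hβ1 hp, mul_one_sub_le_one_sub_g2 hβ2 hp h]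

theorem tendsto_sum_range_atBot_of_add_le {L c : ℕ → ℝ} (hL : Tendsto L atTop atBot)
    (h : ∀ᶠ n in atTop, c n + L n ≤ L (n + 1)) :
    Tendsto (fun n => ∑ k ∈ Finset.range n, c k) atTop atBot := by
  obtain ⟨N, hN⟩ := eventually_atTop.1 h
  have key : ∀ n ≥ N, ∑ k ∈ Finset.range n, c k ≤ L n + (∑ k ∈ Finset.range N, c k - L N) := by
    intro n hn
    induction n, hn using Nat.le_induction with
    | base => linarith
    | succ n hn ih => rw [Finset.sum_range_succ]; linarith [hN n hn]
  exact tendsto_atBot_mono' _ (eventually_atTop.2 ⟨N, key⟩) (tendsto_atBot_add_const_right _ _ hL)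

theorem tendsto_sum_log_branchWeight_atBot_of_mem_basin {β1 β2 b x y : ℝ}
    (hβ1 : β1 ∈ Ioc (0:ℝ) 1) (hβ2 : β2 ∈ Icc (0:ℝ) 1) (hb : 0 < b) (hb2 : b < 2 - β2)
    (hy : y < 1) (hxy : (x, y) ∈ basin β1 β2 1) :
    Tendsto (fun n => ∑ k ∈ Finset.range n, log (branchWeight β1 b (dbl^[k] x))) atTop atBot := by
  set p : ℕ → ℝ × ℝ := fun n => (Fsk β1 β2)^[n] (x, y)
  have hmem : ∀ n, (p n).2 ∈ Ico 0 1 := fun n =>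
    (mapsTo_Fsk_snd_Ico (Ioc_subset_Icc_self hβ1) hβ2).iterate n ⟨hxy.1.2.1, hy⟩
  have hu : Tendsto (fun n => 1 - (p n).2) atTop (𝓝[>] 0) := tendsto_nhdsWithin_iff.2
    ⟨by simpa using (tendsto_const_nhds (x := (1:ℝ))).sub hxy.2,
      .of_forall fun n => sub_pos.2 (hmem n).2⟩
  refine tendsto_sum_range_atBot_of_add_le (tendsto_log_nhdsGT_zero.comp hu) ?_
  filter_upwards [(hu.mono_right nhdsWithin_le_nhds).eventually
    (eventually_le_nhds (by linarith : (0:ℝ) < (2 - β2 - b) / 2))] with n hn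
  have hstep := branchWeight_mul_one_sub_le_one_sub_Fsk_snd (b := b) hβ1.2 hβ2.1
    (Ico_subset_Icc_self (hmem n)) (by linarith)
  rw [Fsk_iterate_fst, ← Function.iterate_succ_apply' (Fsk β1 β2)] at hstep
  rw [Function.comp_apply, Function.comp_apply, ← log_mul (branchWeight_pos hβ1.1 hb _).ne'
    (sub_pos.2 (hmem n).2).ne']
  exact log_le_log (mul_pos (branchWeight_pos hβ1.1 hb _) (sub_pos.2 (hmem n).2)) hstep

theorem stmt10_general (β1 β2 : ℝ) (hβ1 : β1 ∈ Set.Ioo (0:ℝ) 1) (hβ2 : β2 ∈ Set.Ioo (0:ℝ) 1)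
    (hb2 : β2 < 2 - 1/β1) :
    volume (basin β1 β2 1) = 0 := by
  obtain ⟨b, hb_lo, hb_hi⟩ := exists_between (by linarith : 1 / β1 < 2 - β2)
  have hb : 0 < b := (one_div_pos.2 hβ1.1).trans hb_lo
  set S := {x ∈ Ioc (0:ℝ) 1 |
    Tendsto (fun n => ∑ k ∈ Finset.range n, branchWeight (log β1) (log b) (dbl^[k] x)) atTop atBot}
  have hS : volume S = 0 := by
    refine volume_setOf_tendsto_sum_branchWeight_atBot ?_
    rw [← log_mul hβ1.1.ne' hb.ne']
    exact log_pos ((div_lt_iff₀' hβ1.1).1 hb_lo)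
  have hsub : basin β1 β2 1 ⊆ univ ×ˢ {1} ∪ insert 0 S ×ˢ univ := by
    rintro ⟨x, y⟩ hxy
    rcases hxy.1.2.2.eq_or_lt with rfl | hy
    · exact Or.inl ⟨trivial, rfl⟩
    rcases hxy.1.1.1.eq_or_lt with rfl | hx
    · exact Or.inr ⟨Or.inl rfl, trivial⟩
    refine Or.inr ⟨Or.inr ⟨⟨hx, hxy.1.1.2⟩, ?_⟩, trivial⟩
    simpa only [log_branchWeight] using tendsto_sum_log_branchWeight_atBot_of_mem_basin
      (Ioo_subset_Ioc_self hβ1) (Ioo_subset_Icc_self hβ2) hb hb_hi hy hxy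
  refine measure_mono_null hsub (measure_union_null ?_ ?_) <;>
    rw [Measure.volume_eq_prod, Measure.prod_prod]
  · simp
  · simp [measure_congr (insert_ae_eq_self 0 S), hS]

theorem stmt10 (β1 β2 : ℝ) (hβ1 : β1 ∈ Set.Ioo (0:ℝ) 1) (hβ2 : β2 ∈ Set.Ioo (0:ℝ) 1)
    (hb1 : 1/2 < β1) (hb2 : β2 < 2 - 1/β1) :
    volume (basin β1 β2 1) = 0 :=
  stmt10_general β1 β2 hβ1 hβ2 hb2

end
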